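/- Let T be a 2k×2k complex matrix and define S = Φ_{2k}·T·Φ_{2k}^{-1}, where Φ_{2k} = (1/√2)·[[I_k, I_k],[−i·I_k, i·I_k]]. Then T is Bogoliubov if and only if S is a real matrix satisfying S⊤𝕁_{2k}S = 𝕁_{2k} (i.e., S is real symplectic). Consequently T ↦ Φ_{2k}TΦ_{2k}^{-1} is a group isomorphism from the Bogoliubov group onto the real symplectic group. -/

import Mathlib

/-!
`Φ` is unitary, so `T ↦ Φ T Φ⁻¹ = Φ T Φᴴ` is a ⋆-algebra automorphism of the `2k × 2k` complex
matrices; in particular it is multiplicative and bijective. It carries the two conditions defining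
a Bogoliubov matrix to the two conditions defining a real symplectic one: since `Φ^# = Φ Σ`,
the entrywise conjugate of `Φ T Φᴴ` is `Φ (Σ T^# Σ) Φᴴ`, so `Φ T Φᴴ` is real iff `T` is doubled-up;
and since `Φ (-i J) Φᴴ = 𝕁`, for real `S = Φ T Φᴴ` (where `Sᵀ = Sᴴ`) the identity `Sᵀ 𝕁 S = 𝕁`
is `Φ (-i Tᴴ J T) Φᴴ = Φ (-i J) Φᴴ`, i.e. `T^♭ T = 1`.
-/

open Matrix

noncomputable section

/-- The Krein-space metric `J_{2k} = diag(I_k, -I_k)`. -/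
def Jmat (k : ℕ) : Matrix (Fin k ⊕ Fin k) (Fin k ⊕ Fin k) ℂ :=
  Matrix.fromBlocks 1 0 0 (-1)

/-- The block-swap matrix `Σ_{2k} = [[0, I_k],[I_k, 0]]`. -/
def Sig (k : ℕ) : Matrix (Fin k ⊕ Fin k) (Fin k ⊕ Fin k) ℂ :=
  Matrix.fromBlocks 0 1 1 0

/-- A `2r × 2s` complex matrix is doubled-up if `Σ_{2r} X Σ_{2s} = X^#`. -/
def DoubledUp {r s : ℕ} (X : Matrix (Fin r ⊕ Fin r) (Fin s ⊕ Fin s) ℂ) : Prop :=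
  Sig r * X * Sig s = X.map (starRingEnd ℂ)

/-- The ♭-adjoint `X^♭ = J_{2s} X† J_{2r}` of a `2r × 2s` complex matrix. -/
def flatAdj {r s : ℕ} (X : Matrix (Fin r ⊕ Fin r) (Fin s ⊕ Fin s) ℂ) :
    Matrix (Fin s ⊕ Fin s) (Fin r ⊕ Fin r) ℂ :=
  Jmat s * Xᴴ * Jmat r

/-- A `2k × 2k` complex matrix is Bogoliubov if it is doubled-up and ♭-unitary. -/
def Bogoliubov {k : ℕ} (R : Matrix (Fin k ⊕ Fin k) (Fin k ⊕ Fin k) ℂ) : Prop :=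
  DoubledUp R ∧ R * flatAdj R = 1 ∧ flatAdj R * R = 1

/-- `Φ_{2k} = (1/√2)[[I, I],[−iI, iI]]`. -/
def Phi (k : ℕ) : Matrix (Fin k ⊕ Fin k) (Fin k ⊕ Fin k) ℂ :=
  ((Real.sqrt 2 : ℂ))⁻¹ • Matrix.fromBlocks 1 1
    (-(Complex.I • (1 : Matrix (Fin k) (Fin k) ℂ))) (Complex.I • (1 : Matrix (Fin k) (Fin k) ℂ))

/-- The symplectic unit `𝕁_{2k} = [[0, I],[−I, 0]]` (over `ℂ`). -/
def Jsymp (k : ℕ) : Matrix (Fin k ⊕ Fin k) (Fin k ⊕ Fin k) ℂ :=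
  Matrix.fromBlocks 0 1 (-1) 0

section RealMatrix

variable {m n : Type*}

theorem Matrix.map_conj_eq_self_iff {M : Matrix m n ℂ} :
    M.map (starRingEnd ℂ) = M ↔ ∀ a b, (M a b).im = 0 := by
  simp only [← Matrix.ext_iff, map_apply, Complex.conj_eq_iff_im]

theorem Matrix.transpose_eq_conjTranspose_of_im_eq_zero {M : Matrix m n ℂ}
    (h : ∀ a b, (M a b).im = 0) : Mᵀ = Mᴴ := by
  ext a b
  exact (Complex.conj_eq_iff_im.mpr (h b a)).symm

end RealMatrix

section Involution

variable {M : Type*} [Monoid M] {u a b : M}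

theorem mul_eq_iff_eq_mul_of_mul_self_eq_one (hu : u * u = 1) : u * a = b ↔ a = u * b := by
  constructor <;> rintro rfl <;> rw [← mul_assoc, hu, one_mul]

theorem mul_mul_eq_iff_eq_mul_mul_of_mul_self_eq_one (hu : u * u = 1) :
    u * a * u = b ↔ a = u * b * u := by
  constructor <;> rintro rfl <;> rw [← mul_assoc, ← mul_assoc, hu, one_mul, mul_assoc, hu, mul_one]

end Involution

theorem inv_sqrt_two_mul_self : ((Real.sqrt 2 : ℂ))⁻¹ * (Real.sqrt 2 : ℂ)⁻¹ = 2⁻¹ := by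
  rw [← mul_inv, ← Complex.ofReal_mul, Real.mul_self_sqrt zero_le_two]
  norm_num

variable {k : ℕ}

theorem Sig_mul_Sig : Sig k * Sig k = 1 := by
  simp [Sig, fromBlocks_multiply, ← fromBlocks_one]

theorem conjTranspose_Sig : (Sig k)ᴴ = Sig k := by
  simp [Sig, fromBlocks_conjTranspose]

theorem Jmat_mul_Jmat : Jmat k * Jmat k = 1 := by
  simp [Jmat, fromBlocks_multiply, ← fromBlocks_one]

theorem Phi_mul_conjTranspose_Phi : Phi k * (Phi k)ᴴ = 1 := by
  ext (i | i) (j | j) <;> by_cases hij : i = j <;>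
    norm_num [Phi, mul_apply, fromBlocks, Fintype.sum_sum_type, one_apply, hij, eq_comm (a := j),
      Sum.inl_ne_inr, Sum.inr_ne_inl, mul_mul_mul_comm _ Complex.I, inv_sqrt_two_mul_self]

theorem map_conj_Phi : (Phi k).map (starRingEnd ℂ) = Phi k * Sig k := by
  ext (i | i) (j | j) <;> by_cases hij : i = j <;>
    simp [Phi, Sig, mul_apply, fromBlocks, Fintype.sum_sum_type, one_apply, hij]

theorem Jsymp_mul_Phi : Jsymp k * Phi k = Phi k * (-Complex.I • Jmat k) := by
  ext (i | i) (j | j) <;> by_cases hij : i = j <;>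
    simp [Phi, Jsymp, Jmat, mul_apply, fromBlocks, Fintype.sum_sum_type, one_apply, hij, mul_assoc]

theorem Phi_mem_unitary : Phi k ∈ unitary (Matrix (Fin k ⊕ Fin k) (Fin k ⊕ Fin k) ℂ) :=
  Unitary.mem_iff.mpr ⟨mul_eq_one_comm.mp Phi_mul_conjTranspose_Phi, Phi_mul_conjTranspose_Phi⟩

def phiConj (k : ℕ) :
    Matrix (Fin k ⊕ Fin k) (Fin k ⊕ Fin k) ℂ ≃⋆ₐ[ℂ] Matrix (Fin k ⊕ Fin k) (Fin k ⊕ Fin k) ℂ :=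
  Unitary.conjStarAlgAut ℂ _ ⟨Phi k, Phi_mem_unitary⟩

theorem phiConj_apply (T : Matrix (Fin k ⊕ Fin k) (Fin k ⊕ Fin k) ℂ) :
    phiConj k T = Phi k * T * (Phi k)ᴴ :=
  rfl

theorem Phi_mul_mul_inv_Phi (T : Matrix (Fin k ⊕ Fin k) (Fin k ⊕ Fin k) ℂ) :
    Phi k * T * (Phi k)⁻¹ = phiConj k T := by
  rw [inv_eq_right_inv Phi_mul_conjTranspose_Phi, phiConj_apply]

theorem map_conj_phiConj (T : Matrix (Fin k ⊕ Fin k) (Fin k ⊕ Fin k) ℂ) :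
    (phiConj k T).map (starRingEnd ℂ) = phiConj k (Sig k * T.map (starRingEnd ℂ) * Sig k) := by
  simp only [phiConj_apply, Matrix.map_mul, conjTranspose_map (starRingEnd ℂ) (fun _ => rfl),
    map_conj_Phi, conjTranspose_mul, conjTranspose_Sig, Matrix.mul_assoc]

theorem doubledUp_iff_map_conj_phiConj (T : Matrix (Fin k ⊕ Fin k) (Fin k ⊕ Fin k) ℂ) :
    DoubledUp T ↔ (phiConj k T).map (starRingEnd ℂ) = phiConj k T := by
  rw [map_conj_phiConj, EmbeddingLike.apply_eq_iff_eq, DoubledUp,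
    mul_mul_eq_iff_eq_mul_mul_of_mul_self_eq_one Sig_mul_Sig, eq_comm]

theorem phiConj_smul_Jmat : phiConj k (-Complex.I • Jmat k) = Jsymp k := by
  rw [phiConj_apply, ← Jsymp_mul_Phi, Matrix.mul_assoc, Phi_mul_conjTranspose_Phi, Matrix.mul_one]

theorem flatAdj_mul_self_eq_one_iff (T : Matrix (Fin k ⊕ Fin k) (Fin k ⊕ Fin k) ℂ) :
    flatAdj T * T = 1 ↔ Tᴴ * Jmat k * T = Jmat k := by
  rw [flatAdj, Matrix.mul_assoc, Matrix.mul_assoc,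
    mul_eq_iff_eq_mul_of_mul_self_eq_one Jmat_mul_Jmat, Matrix.mul_one, ← Matrix.mul_assoc]

theorem phiConj_symplectic_iff (T : Matrix (Fin k ⊕ Fin k) (Fin k ⊕ Fin k) ℂ) :
    (phiConj k T)ᴴ * Jsymp k * phiConj k T = Jsymp k ↔ Tᴴ * Jmat k * T = Jmat k := by
  rw [← phiConj_smul_Jmat, ← star_eq_conjTranspose, ← map_star, ← map_mul, ← map_mul,
    EmbeddingLike.apply_eq_iff_eq, Matrix.mul_smul, Matrix.smul_mul, star_eq_conjTranspose]
  exact (smul_right_injective _ (neg_ne_zero.mpr Complex.I_ne_zero)).eq_iff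

theorem bogoliubov_iff_phiConj (T : Matrix (Fin k ⊕ Fin k) (Fin k ⊕ Fin k) ℂ) :
    Bogoliubov T ↔ (∀ a b, (phiConj k T a b).im = 0) ∧
      (phiConj k T)ᵀ * Jsymp k * phiConj k T = Jsymp k := by
  rw [Bogoliubov, mul_eq_one_comm (a := T), and_self, flatAdj_mul_self_eq_one_iff,
    ← phiConj_symplectic_iff, doubledUp_iff_map_conj_phiConj, Matrix.map_conj_eq_self_iff]
  exact and_congr_right fun hreal => by rw [transpose_eq_conjTranspose_of_im_eq_zero hreal]

/-- `T` is Bogoliubov iff `S = Φ T Φ⁻¹` is real symplectic (real entries and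
`Sᵀ 𝕁 S = 𝕁`); moreover `T ↦ Φ T Φ⁻¹` is multiplicative, injective, and onto
the real symplectic matrices, hence a group isomorphism from the Bogoliubov
group onto the real symplectic group. -/
theorem bogoliubov_symplectic_isomorphism (k : ℕ) :
    (∀ T : Matrix (Fin k ⊕ Fin k) (Fin k ⊕ Fin k) ℂ,
      Bogoliubov T ↔
        ((∀ a b, ((Phi k * T * (Phi k)⁻¹) a b).im = 0) ∧
          (Phi k * T * (Phi k)⁻¹)ᵀ * Jsymp k * (Phi k * T * (Phi k)⁻¹) = Jsymp k)) ∧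
    (∀ T₁ T₂ : Matrix (Fin k ⊕ Fin k) (Fin k ⊕ Fin k) ℂ,
      Phi k * (T₁ * T₂) * (Phi k)⁻¹
        = (Phi k * T₁ * (Phi k)⁻¹) * (Phi k * T₂ * (Phi k)⁻¹)) ∧
    (∀ T₁ T₂ : Matrix (Fin k ⊕ Fin k) (Fin k ⊕ Fin k) ℂ,
      Bogoliubov T₁ → Bogoliubov T₂ →
      Phi k * T₁ * (Phi k)⁻¹ = Phi k * T₂ * (Phi k)⁻¹ → T₁ = T₂) ∧
    (∀ S : Matrix (Fin k ⊕ Fin k) (Fin k ⊕ Fin k) ℂ,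
      (∀ a b, (S a b).im = 0) → Sᵀ * Jsymp k * S = Jsymp k →
      ∃ T, Bogoliubov T ∧ Phi k * T * (Phi k)⁻¹ = S) := by
  simp only [Phi_mul_mul_inv_Phi, map_mul]
  refine ⟨bogoliubov_iff_phiConj, fun _ _ => trivial, fun _ _ _ _ h => (phiConj k).injective h,
    fun S hreal hsymp => ⟨(phiConj k).symm S, ?_, (phiConj k).apply_symm_apply S⟩⟩
  rw [bogoliubov_iff_phiConj, StarAlgEquiv.apply_symm_apply]
  exact ⟨hreal, hsymp⟩
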